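/- Let O_1 be the top-down odometer on finite words (O_1(w_1, …, w_j) = (1,…,1 (w_1−1 times), w_2+1, …, w_j) for j > 1, and O_1(w_1) = (1,…,1) ((w_1+1) times)). Then for every ω ∈ Ω_1, 2^{s(O_1(ω))−1} + n_{O_1(ω)} = 2^{s(ω)−1} + n_ω + 1. -/

import Mathlib

/-- To a finite word `ω = (w₁, …, w_j)` (a list, head = `w₁`) associate the
nonnegative integer `n_ω` whose binary expansion is the concatenation of the
blocks `b̂_{w_j−1} b̂_{w_{j−1}−1} ⋯ b̂_{w_1−1}`, where `b̂_k` is a `0` followed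
by `k` ones. -/
def wordVal (ω : List ℕ) : ℕ :=
  ω.reverse.foldl (fun v w => v * 2 ^ w + (2 ^ (w - 1) - 1)) 0

/-- The top-down odometer on finite words. -/
def topDownOdometer : List ℕ → List ℕ
  | [] => []
  | [w] => List.replicate (w + 1) 1
  | w₁ :: w₂ :: rest => List.replicate (w₁ - 1) 1 ++ (w₂ + 1) :: rest

/-! Put `N(ω) = 2^{s(ω)-1} + n_ω`: its binary expansion is `b̂_{w_j-1} ⋯ b̂_{w_1-1}` with the
leading `0` turned into a `1`. Adding one turns the lowest block `0 1^{w₁-1}` into `1 0^{w₁-1}`.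
The `w₁ - 1` zeros are blocks `b̂_0`, and the carried `1` is appended to the next block,
turning `b̂_{w₂-1}` into `b̂_{w₂}`; for a one-letter word it becomes the new leading digit,
above `w₁ + 1` blocks `b̂_0`. -/

@[simp]
lemma wordVal_nil : wordVal [] = 0 := rfl

lemma wordVal_cons (w : ℕ) (t : List ℕ) :
    wordVal (w :: t) = wordVal t * 2 ^ w + (2 ^ (w - 1) - 1) := by
  simp [wordVal]

lemma wordVal_replicate_one_append (k : ℕ) (t : List ℕ) :
    wordVal (List.replicate k 1 ++ t) = 2 ^ k * wordVal t := by
  induction k with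
  | zero => simp
  | succ k ih =>
    rw [List.replicate_succ, List.cons_append, wordVal_cons, ih]
    ring

lemma wordVal_succ_cons {w : ℕ} (hw : 1 ≤ w) (t : List ℕ) :
    wordVal ((w + 1) :: t) = 2 * wordVal (w :: t) + 1 := by
  obtain ⟨a, rfl⟩ := Nat.exists_eq_add_of_le' hw
  simp only [wordVal_cons, Nat.add_sub_cancel]
  zify [Nat.one_le_two_pow (n := a), Nat.one_le_two_pow (n := a + 1)]
  ring

lemma wordVal_cons_add_one {w : ℕ} (hw : 1 ≤ w) (t : List ℕ) :
    wordVal (w :: t) + 1 = 2 ^ (w - 1) * (2 * wordVal t + 1) := by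
  obtain ⟨a, rfl⟩ := Nat.exists_eq_add_of_le' hw
  simp only [wordVal_cons, Nat.add_sub_cancel]
  zify [Nat.one_le_two_pow (n := a)]
  ring

lemma topDownOdometer_singleton_adds_one {w : ℕ} (hw : 1 ≤ w) :
    2 ^ ((topDownOdometer [w]).sum - 1) + wordVal (topDownOdometer [w]) =
      2 ^ ([w].sum - 1) + wordVal [w] + 1 := by
  have hval : wordVal (List.replicate (w + 1) 1) = 0 := by
    simpa using wordVal_replicate_one_append (w + 1) []
  rw [add_assoc, wordVal_cons_add_one hw]
  simp only [topDownOdometer, List.sum_replicate, smul_eq_mul, mul_one, hval,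
    List.sum_singleton, wordVal_nil, Nat.add_sub_cancel, mul_zero, zero_add, add_zero]
  rw [← two_mul, ← pow_succ', Nat.sub_add_cancel hw]

lemma topDownOdometer_cons_cons_adds_one {w₁ w₂ : ℕ} (hw₁ : 1 ≤ w₁) (hw₂ : 1 ≤ w₂)
    (rest : List ℕ) :
    2 ^ ((topDownOdometer (w₁ :: w₂ :: rest)).sum - 1)
        + wordVal (topDownOdometer (w₁ :: w₂ :: rest)) =
      2 ^ ((w₁ :: w₂ :: rest).sum - 1) + wordVal (w₁ :: w₂ :: rest) + 1 := by
  have hsum : (topDownOdometer (w₁ :: w₂ :: rest)).sum = (w₁ :: w₂ :: rest).sum := by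
    simp only [topDownOdometer, List.sum_append, List.sum_replicate, smul_eq_mul,
      mul_one, List.sum_cons]
    omega
  rw [hsum, add_assoc, wordVal_cons_add_one hw₁, topDownOdometer,
    wordVal_replicate_one_append, wordVal_succ_cons hw₂]

theorem topDownOdometer_adds_one (ω : List ℕ) (hne : ω ≠ []) (hω : ∀ x ∈ ω, 1 ≤ x) :
    2 ^ ((topDownOdometer ω).sum - 1) + wordVal (topDownOdometer ω) =
      2 ^ (ω.sum - 1) + wordVal ω + 1 := by
  match ω, hne with
  | [w], _ => exact topDownOdometer_singleton_adds_one (hω w (by simp))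
  | w₁ :: w₂ :: rest, _ =>
    exact topDownOdometer_cons_cons_adds_one (hω w₁ (by simp)) (hω w₂ (by simp)) rest
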